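/- arXiv:2604.18903 — 3 statements merged into one kernel-verified Lean document; each statement's English description precedes it below -/
import Mathlib

section
/- Under the hypotheses of the previous identity (f₁ strictly decreasing and g₁ strictly increasing with g₁' > 0 and f₁' < 0 on the relevant interval), both det(J) > 0 and tr(J) < 0; hence the matrix J is Hurwitz. -/
/-!
At the equilibrium `μ₁(s*) = g₁(x*) = α D₂ (x* - c)/x* < α D₂`, so with `μ₁'(s*) > 0` both the
determinant `D₂ (α D₂ - μ₁(s*)) + α D₂ k₁ μ₁'(s*) x*` and the trace
`-D₂ - k₁ μ₁'(s*) x* + (μ₁(s*) - α D₂)` have the required signs. An eigenvalue `z = x + iy` of a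
real `2 × 2` matrix solves `z² - t z + d = 0`; if `y ≠ 0` the imaginary part forces `x = t/2 < 0`,
and if `y = 0` then `x ≥ 0` would give `x² - t x + d > 0`.
-/

open Matrix

lemma Complex.re_neg_of_sq_sub_mul_add_eq_zero {t d : ℝ} (ht : t < 0) (hd : 0 < d) {z : ℂ}
    (hz : z ^ 2 - t * z + d = 0) : z.re < 0 := by
  have hre : z.re ^ 2 - z.im ^ 2 - t * z.re + d = 0 := by
    simpa [pow_two] using congrArg Complex.re hz
  have him : z.im * (2 * z.re - t) = 0 := by
    have := congrArg Complex.im hz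
    simp only [pow_two, Complex.sub_im, Complex.add_im, Complex.mul_im, Complex.ofReal_re,
      Complex.ofReal_im, Complex.zero_im] at this
    linear_combination this
  rcases mul_eq_zero.mp him with hy | hx
  · rw [hy] at hre
    nlinarith
  · linarith

lemma Matrix.eval_sq_sub_trace_add_det_eq_zero_of_mem_spectrum {J : Matrix (Fin 2) (Fin 2) ℝ}
    {z : ℂ} (hz : z ∈ spectrum ℂ (J.map (algebraMap ℝ ℂ))) :
    z ^ 2 - J.trace * z + J.det = 0 := by
  rw [mem_spectrum_iff_isRoot_charpoly, charpoly_map, charpoly_fin_two] at hz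
  simpa using hz.eq_zero

lemma Matrix.re_neg_of_mem_spectrum_of_det_pos_of_trace_neg {J : Matrix (Fin 2) (Fin 2) ℝ}
    (hdet : 0 < J.det) (htr : J.trace < 0) {z : ℂ}
    (hz : z ∈ spectrum ℂ (J.map (algebraMap ℝ ℂ))) : z.re < 0 :=
  Complex.re_neg_of_sq_sub_mul_add_eq_zero htr hdet
    (eval_sq_sub_trace_add_det_eq_zero_of_mem_spectrum hz)

lemma mul_sub_div_lt_self {a c x : ℝ} (ha : 0 < a) (hc : 0 < c) (hcx : c < x) :
    a * (x - c) / x < a := by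
  rw [div_lt_iff₀ (hc.trans hcx)]
  nlinarith

theorem jacobian_block_E1010_hurwitz_general
    (D₂ α k₁ Sin c : ℝ) (hD₂ : 0 < D₂) (hα : 0 < α) (hk₁ : 0 < k₁)
    (hc : 0 < c)
    (μ₁ μ₁' : ℝ → ℝ)
    (hμ₁pos : ∀ s, 0 < μ₁' s)
    (f₁ g₁ : ℝ → ℝ)
    (hf₁ : ∀ x, f₁ x = μ₁ (Sin - α * k₁ * x))
    (hg₁ : ∀ x, g₁ x = α * D₂ * (x - c) / x)
    (xs : ℝ) (hxs : c < xs)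
    (hsol : f₁ xs = g₁ xs)
    (J : Matrix (Fin 2) (Fin 2) ℝ)
    (hJ : J = !![-D₂ - k₁ * μ₁' (Sin - α * k₁ * xs) * xs, -k₁ * μ₁ (Sin - α * k₁ * xs);
                 μ₁' (Sin - α * k₁ * xs) * xs, μ₁ (Sin - α * k₁ * xs) - α * D₂]) :
    0 < J.det ∧ J.trace < 0 ∧
    (∀ z ∈ spectrum ℂ (J.map (algebraMap ℝ ℂ)), z.re < 0) := by
  set m := μ₁ (Sin - α * k₁ * xs)
  set m' := μ₁' (Sin - α * k₁ * xs)
  have hm'x : 0 < k₁ * m' * xs := by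
    have := hμ₁pos (Sin - α * k₁ * xs)
    have := hc.trans hxs
    positivity
  have hm : m < α * D₂ := by
    have hmg : m = g₁ xs := by rw [← hsol, hf₁]
    rw [hmg, hg₁]
    exact mul_sub_div_lt_self (mul_pos hα hD₂) hc hxs
  have hdet : 0 < J.det := by
    rw [hJ, det_fin_two_of]
    nlinarith [mul_pos hD₂ (sub_pos.2 hm), mul_pos (mul_pos hα hD₂) hm'x]
  have htr : J.trace < 0 := by
    rw [hJ, trace_fin_two_of]
    linarith
  exact ⟨hdet, htr, fun z hz => re_neg_of_mem_spectrum_of_det_pos_of_trace_neg hdet htr hz⟩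

/-- Under the hypotheses of the det/trace identity, with `f₁` strictly decreasing
(`f₁' < 0`) and `g₁` strictly increasing (`g₁' > 0`) at the solution, the
Jacobian block satisfies `det J > 0` and `tr J < 0`; hence `J` is Hurwitz. -/
theorem jacobian_block_E1010_hurwitz
    (D₂ α k₁ Sin c : ℝ) (hD₂ : 0 < D₂) (hα : 0 < α) (hk₁ : 0 < k₁)
    (hSin : 0 < Sin) (hc : 0 < c)
    (μ₁ μ₁' : ℝ → ℝ)
    (hμ₁ : ∀ s, HasDerivAt μ₁ (μ₁' s) s)
    (hμ₁pos : ∀ s, 0 < μ₁' s)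
    (f₁ g₁ : ℝ → ℝ)
    (hf₁ : ∀ x, f₁ x = μ₁ (Sin - α * k₁ * x))
    (hg₁ : ∀ x, g₁ x = α * D₂ * (x - c) / x)
    (xs : ℝ) (hxs : c < xs) (hxs' : xs ≤ Sin / (α * k₁))
    (hsol : f₁ xs = g₁ xs)
    (hf₁' : deriv f₁ xs < 0) (hg₁' : 0 < deriv g₁ xs)
    (J : Matrix (Fin 2) (Fin 2) ℝ)
    (hJ : J = !![-D₂ - k₁ * μ₁' (Sin - α * k₁ * xs) * xs, -k₁ * μ₁ (Sin - α * k₁ * xs);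
                 μ₁' (Sin - α * k₁ * xs) * xs, μ₁ (Sin - α * k₁ * xs) - α * D₂]) :
    0 < J.det ∧ J.trace < 0 ∧
    (∀ z ∈ spectrum ℂ (J.map (algebraMap ℝ ℂ)), z.re < 0) :=
  jacobian_block_E1010_hurwitz_general D₂ α k₁ Sin c hD₂ hα hk₁ hc μ₁ μ₁' hμ₁pos f₁ g₁ hf₁ hg₁ xs
    hxs hsol J hJ
end

section
/- Let μ₁ satisfy H1 (continuous, μ₁(0)=0, strictly increasing, bounded by m₁), and let α, k₁, D₂, S₁ⁱⁿ > 0 and c ∈ (0, S₁ⁱⁿ/(αk₁)). Define F(x) = μ₁(S₁ⁱⁿ − αk₁x) − αD₂(x − c)/x on [c, S₁ⁱⁿ/(αk₁)]. Then F is strictly decreasing, F(c) = μ₁(S₁ⁱⁿ − αk₁c) > 0, and F(S₁ⁱⁿ/(αk₁)) = −αD₂(S₁ⁱⁿ/(αk₁) − c)/(S₁ⁱⁿ/(αk₁)) < 0; hence F has a unique zero in (c, S₁ⁱⁿ/(αk₁)). -/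
/-! `F` is a strictly decreasing term `μ₁ (Sin - α k₁ x)` minus the nondecreasing term
`α D₂ (1 - c / x)`, so it is strictly decreasing; `μ₁ 0 = 0` and strict monotonicity of `μ₁` fix
the signs at the endpoints, and the intermediate value theorem gives the zero. -/

open Set

theorem StrictAntiOn.existsUnique_mem_Ioo_eq {α δ : Type*} [ConditionallyCompleteLinearOrder α]
    [TopologicalSpace α] [OrderTopology α] [DenselyOrdered α] [LinearOrder δ]
    [TopologicalSpace δ] [OrderClosedTopology δ] {f : α → δ} {a b : α} {y : δ}
    (hf : StrictAntiOn f (Icc a b)) (hcont : ContinuousOn f (Icc a b)) (hab : a ≤ b)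
    (hy : y ∈ Ioo (f b) (f a)) : ∃! x, x ∈ Ioo a b ∧ f x = y := by
  obtain ⟨x, hx, rfl⟩ := intermediate_value_Ioo' hab hcont hy
  exact ⟨x, ⟨hx, rfl⟩, fun x' ⟨hx', hfx'⟩ ↦
    hf.injOn (Ioo_subset_Icc_self hx') (Ioo_subset_Icc_self hx) hfx'⟩

lemma mapsTo_sub_mul_Iic_div_Ici {S κ : ℝ} (hκ : 0 < κ) :
    MapsTo (fun x ↦ S - κ * x) (Iic (S / κ)) (Ici 0) := fun _ hx ↦
  sub_nonneg.2 ((le_div_iff₀' hκ).1 hx)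

lemma StrictMonoOn.strictAntiOn_comp_sub_mul {μ : ℝ → ℝ} {S κ : ℝ} (hμ : StrictMonoOn μ (Ici 0))
    (hκ : 0 < κ) : StrictAntiOn (fun x ↦ μ (S - κ * x)) (Iic (S / κ)) :=
  hμ.comp_strictAntiOn (fun _ _ _ _ hxy ↦ by gcongr) (mapsTo_sub_mul_Iic_div_Ici hκ)

lemma monotoneOn_mul_sub_div_self {a c : ℝ} (ha : 0 ≤ a) (hc : 0 ≤ c) :
    MonotoneOn (fun x ↦ a * (x - c) / x) (Ioi 0) := fun x hx y hy hxy ↦ by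
  rw [div_le_div_iff₀ hx hy]
  nlinarith [mul_nonneg (mul_nonneg ha hc) (sub_nonneg.2 hxy)]

theorem unique_zero_F_lemH1_general
    (α k₁ D₂ Sin c : ℝ)
    (hα : 0 < α) (hk₁ : 0 < k₁) (hD₂ : 0 < D₂)
    (hc : c ∈ Set.Ioo 0 (Sin / (α * k₁)))
    (μ₁ : ℝ → ℝ)
    (hμc : ContinuousOn μ₁ (Set.Ici 0))
    (hμ0 : μ₁ 0 = 0)
    (hμmono : StrictMonoOn μ₁ (Set.Ici 0))
    (F : ℝ → ℝ)
    (hF : ∀ x, F x = μ₁ (Sin - α * k₁ * x) - α * D₂ * (x - c) / x) :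
    StrictAntiOn F (Set.Icc c (Sin / (α * k₁))) ∧
    F c = μ₁ (Sin - α * k₁ * c) ∧ 0 < F c ∧
    F (Sin / (α * k₁)) =
      -(α * D₂ * (Sin / (α * k₁) - c) / (Sin / (α * k₁))) ∧
    F (Sin / (α * k₁)) < 0 ∧
    ∃! x, x ∈ Set.Ioo c (Sin / (α * k₁)) ∧ F x = 0 := by
  obtain ⟨hc0, hcb⟩ := hc
  set b := Sin / (α * k₁)
  have hαk : 0 < α * k₁ := mul_pos hα hk₁
  have hαD : 0 < α * D₂ := mul_pos hα hD₂
  have hIcc_Iic : Icc c b ⊆ Iic b := Icc_subset_Iic_self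
  have hIcc_Ioi : Icc c b ⊆ Ioi 0 := fun x hx ↦ hc0.trans_le hx.1
  have hmaps := mapsTo_sub_mul_Iic_div_Ici (S := Sin) hαk
  have hanti : StrictAntiOn F (Icc c b) := by
    simpa only [funext hF, sub_eq_add_neg] using
      ((hμmono.strictAntiOn_comp_sub_mul hαk).mono hIcc_Iic).add_antitone
        ((monotoneOn_mul_sub_div_self hαD.le hc0.le).mono hIcc_Ioi).neg
  have hcont : ContinuousOn F (Icc c b) := by
    rw [funext hF]
    exact ((hμc.comp (by fun_prop) hmaps).mono hIcc_Iic).sub <|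
      ContinuousOn.div (by fun_prop) continuousOn_id fun x hx ↦ (hIcc_Ioi hx).ne'
  have hFc : F c = μ₁ (Sin - α * k₁ * c) := by rw [hF, sub_self, mul_zero, zero_div, sub_zero]
  have hFc_pos : 0 < F c := by
    rw [hFc, ← hμ0]
    exact hμmono self_mem_Ici (hmaps hcb.le) (by rw [sub_pos, ← lt_div_iff₀' hαk]; exact hcb)
  have hFb : F b = -(α * D₂ * (b - c) / b) := by
    rw [hF, mul_div_cancel₀ _ hαk.ne', sub_self, hμ0, zero_sub]
  have hFb_neg : F b < 0 := by
    rw [hFb]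
    exact neg_neg_of_pos (div_pos (mul_pos hαD (sub_pos.2 hcb)) (hc0.trans hcb))
  exact ⟨hanti, hFc, hFc_pos, hFb, hFb_neg,
    hanti.existsUnique_mem_Ioo_eq hcont hcb.le ⟨hFb_neg, hFc_pos⟩⟩

/-- Explicit version of Lemma 2 (lemH1): with `μ₁` satisfying H1, the function
`F(x) = μ₁(S₁ⁱⁿ − αk₁x) − αD₂(x − c)/x` is strictly decreasing on
`[c, S₁ⁱⁿ/(αk₁)]`, positive at `c`, negative at `S₁ⁱⁿ/(αk₁)`, and has a unique
zero in `(c, S₁ⁱⁿ/(αk₁))`. -/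
theorem unique_zero_F_lemH1
    (α k₁ D₂ Sin m₁ c : ℝ)
    (hα : 0 < α) (hk₁ : 0 < k₁) (hD₂ : 0 < D₂) (hSin : 0 < Sin) (hm₁ : 0 < m₁)
    (hc : c ∈ Set.Ioo 0 (Sin / (α * k₁)))
    (μ₁ : ℝ → ℝ)
    (hμc : ContinuousOn μ₁ (Set.Ici 0))
    (hμ0 : μ₁ 0 = 0)
    (hμmono : StrictMonoOn μ₁ (Set.Ici 0))
    (hμbdd : ∀ s, 0 ≤ s → μ₁ s < m₁)
    (F : ℝ → ℝ)
    (hF : ∀ x, F x = μ₁ (Sin - α * k₁ * x) - α * D₂ * (x - c) / x) :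
    StrictAntiOn F (Set.Icc c (Sin / (α * k₁))) ∧
    F c = μ₁ (Sin - α * k₁ * c) ∧ 0 < F c ∧
    F (Sin / (α * k₁)) =
      -(α * D₂ * (Sin / (α * k₁) - c) / (Sin / (α * k₁))) ∧
    F (Sin / (α * k₁)) < 0 ∧
    ∃! x, x ∈ Set.Ioo c (Sin / (α * k₁)) ∧ F x = 0 :=
  unique_zero_F_lemH1_general α k₁ D₂ Sin c hα hk₁ hD₂ hc μ₁ hμc hμ0 hμmono F hF
end

section
/- Let μ₂ satisfy H2 (continuous, μ₂(0)=0, μ₂(∞)=0, unimodal with maximum at S₂ᵐ), and fix constants s > 0, αk₃ > 0, a > 0 with s − αk₃·a > 0. Define f₂(x) = μ₂(s − αk₃(x − a)) for x ∈ [a, d] where d = a + s/(αk₃), and g₂(x) = αD₂(x − a)/x for D₂ > 0. If additionally the maximizer x₂ᵐ = a + (s − S₂ᵐ)/(αk₃) satisfies x₂ᵐ ≤ a (i.e., s ≤ S₂ᵐ), then f₂ is strictly decreasing on [a, d] and the equation f₂(x) = g₂(x) has a unique solution in (a, d). -/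
open Filter Topology

/-- Explicit uniqueness case of Lemma 3 (lemH2): with `μ₂` satisfying H2 and
`s ≤ S₂ᵐ` (i.e. the maximizer `x₂ᵐ = a + (s − S₂ᵐ)/(αk₃)` satisfies `x₂ᵐ ≤ a`),
`f₂(x) = μ₂(s − αk₃(x − a))` is strictly decreasing on `[a, d]` with
`d = a + s/(αk₃)`, and `f₂(x) = g₂(x)` with `g₂(x) = αD₂(x − a)/x` has a unique
solution in `(a, d)`. -/
theorem unique_coexistence_solution_monotone_case
    (α k₃ D₂ s a Sm : ℝ)
    (hα : 0 < α) (hk₃ : 0 < k₃) (hD₂ : 0 < D₂) (hs : 0 < s) (ha : 0 < a)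
    (hsa : 0 < s - α * k₃ * a)
    (hSm : 0 < Sm)
    (μ₂ : ℝ → ℝ)
    (hμc : ContinuousOn μ₂ (Set.Ici 0))
    (hμ0 : μ₂ 0 = 0)
    (hμlim : Tendsto μ₂ atTop (𝓝 0))
    (hμmono : StrictMonoOn μ₂ (Set.Icc 0 Sm))
    (hμanti : StrictAntiOn μ₂ (Set.Ici Sm))
    (hsSm : s ≤ Sm)
    (f₂ g₂ : ℝ → ℝ) (d : ℝ)
    (hd : d = a + s / (α * k₃))
    (hf₂ : ∀ x, f₂ x = μ₂ (s - α * k₃ * (x - a)))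
    (hg₂ : ∀ x, g₂ x = α * D₂ * (x - a) / x) :
    StrictAntiOn f₂ (Set.Icc a d) ∧
    ∃! x, x ∈ Set.Ioo a d ∧ f₂ x = g₂ x := by
  have hαk : 0 < α * k₃ := mul_pos hα hk₃
  have had : a < d := by
    rw [hd]; linarith [div_pos hs hαk]
  -- membership of affine image
  have hmem : ∀ x ∈ Set.Icc a d, s - α * k₃ * (x - a) ∈ Set.Icc (0:ℝ) Sm := by
    intro x hx
    obtain ⟨hx1, hx2⟩ := hx
    constructor
    · have : α * k₃ * (x - a) ≤ α * k₃ * (d - a) := by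
        apply mul_le_mul_of_nonneg_left (by linarith) (le_of_lt hαk)
      have hda : α * k₃ * (d - a) = s := by
        rw [hd]; field_simp; ring
      linarith
    · have : 0 ≤ α * k₃ * (x - a) := mul_nonneg hαk.le (by linarith)
      linarith
  have hfanti : StrictAntiOn f₂ (Set.Icc a d) := by
    intro x hx y hy hxy
    rw [hf₂ x, hf₂ y]
    apply hμmono (hmem y hy) (hmem x hx)
    have : α * k₃ * (x - a) < α * k₃ * (y - a) := by
      apply mul_lt_mul_of_pos_left (by linarith) hαk
    linarith
  refine ⟨hfanti, ?_⟩
  set h : ℝ → ℝ := fun x => f₂ x - g₂ x with hh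
  have hganti : ∀ x ∈ Set.Icc a d, ∀ y ∈ Set.Icc a d, x < y → g₂ x < g₂ y := by
    intro x hx y hy hxy
    have hx0 : 0 < x := lt_of_lt_of_le ha hx.1
    have hy0 : 0 < y := lt_of_lt_of_le ha hy.1
    rw [hg₂ x, hg₂ y, div_lt_div_iff₀ hx0 hy0]
    nlinarith [mul_pos (mul_pos hα hD₂) (mul_pos ha (sub_pos.mpr hxy))]
  have hanti : StrictAntiOn h (Set.Icc a d) := by
    intro x hx y hy hxy
    have := hfanti hx hy hxy
    have := hganti x hx y hy hxy
    simp only [hh]; linarith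
  -- continuity of h on Icc a d
  have hfc : ContinuousOn f₂ (Set.Icc a d) := by
    have : ∀ x ∈ Set.Icc a d, f₂ x = μ₂ (s - α * k₃ * (x - a)) := fun x _ => hf₂ x
    apply ContinuousOn.congr _ this
    apply hμc.comp
    · exact (continuous_const.sub ((continuous_const.mul (continuous_id.sub continuous_const)))).continuousOn
    · intro x hx
      exact (hmem x hx).1
  have hgc : ContinuousOn g₂ (Set.Icc a d) := by
    have : ∀ x ∈ Set.Icc a d, g₂ x = α * D₂ * (x - a) / x := fun x _ => hg₂ x
    apply ContinuousOn.congr _ this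
    apply ContinuousOn.div
    · exact (continuous_const.mul (continuous_id.sub continuous_const)).continuousOn
    · exact continuousOn_id
    · intro x hx
      exact ne_of_gt (lt_of_lt_of_le ha hx.1)
  have hhc : ContinuousOn h (Set.Icc a d) := hfc.sub hgc
  have hha : 0 < h a := by
    have hf2a : f₂ a = μ₂ s := by rw [hf₂ a]; ring_nf
    have : 0 < μ₂ s := by
      rw [← hμ0]
      exact hμmono ⟨le_refl 0, hSm.le⟩ ⟨hs.le, hsSm⟩ hs
    have hga : g₂ a = 0 := by rw [hg₂ a]; simp
    simp only [hh, hf2a, hga]; linarith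
  have hhd : h d < 0 := by
    have hf2d : f₂ d = 0 := by
      rw [hf₂ d, hd]; rw [show s - α * k₃ * (a + s / (α * k₃) - a) = 0 by field_simp; ring]; exact hμ0
    have hgd : 0 < g₂ d := by
      rw [hg₂ d]
      apply div_pos (by nlinarith [mul_pos hα hD₂] : (0:ℝ) < α * D₂ * (d - a)) (by linarith)
    simp only [hh, hf2d]; linarith
  have := intermediate_value_Ioo' had.le hhc
  have h0 : (0:ℝ) ∈ Set.Ioo (h d) (h a) := ⟨hhd, hha⟩
  obtain ⟨x, hx, hx0⟩ := this h0
  refine ⟨x, ⟨hx, by simpa [hh, sub_eq_zero] using hx0⟩, ?_⟩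
  intro y ⟨hy, hy0⟩
  have hxI : x ∈ Set.Icc a d := Set.Ioo_subset_Icc_self hx
  have hyI : y ∈ Set.Icc a d := Set.Ioo_subset_Icc_self hy
  have hyh : h y = 0 := by simp only [hh, hy0]; ring
  exact hanti.injOn hyI hxI (by rw [hyh, hx0])
end
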